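/- (Existence of a universal Gröbner basis) Let K be a field and I an ideal of P = K[x₁,…,xₙ]. There exists a finite subset G of I that is simultaneously a σ-Gröbner basis of I for every monomial order σ on P. -/

import Mathlib

open MvPolynomial

/-!
Fix a monomial order `σ` and a finite `σ`-Gröbner basis `G` of `I` (Noetherianity). If another
order `τ` picks the same leading exponents on `G`, then `LT_σ(I) = ⟨lm_τ(G)⟩ ⊆ LT_τ(I)`; since two
leading-term ideals of the same ideal are never strictly nested, `G` is a `τ`-Gröbner basis too.
Viewed as points of `Bool^(ℕⁿ × ℕⁿ)`, the monomial orders form a closed, hence compact, subspace,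
in which "`τ` picks these leading exponents on `G`" is an open condition. Finitely many of these
neighbourhoods cover all monomial orders, and the union of their Gröbner bases is universal.
-/

/-- A monomial order on the exponent vectors `ν →₀ ℕ`: a linear order compatible with
addition and having `0` as least element. -/
structure MonomialOrd (ν : Type) where
  le : (ν →₀ ℕ) → (ν →₀ ℕ) → Prop
  le_refl : ∀ a, le a a
  le_trans : ∀ a b c, le a b → le b c → le a c
  le_antisymm : ∀ a b, le a b → le b a → a = b
  le_total : ∀ a b, le a b ∨ le b a
  add_le_add : ∀ a b c, le a b → le (a + c) (b + c)
  zero_le : ∀ a, le 0 a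

/-- `a` is the σ-largest exponent vector in the support of `f`
(so `X^a` is the σ-leading monomial of `f`). -/
def IsLeadingExp {K : Type} [Field K] {ν : Type} (σ : MonomialOrd ν)
    (f : MvPolynomial ν K) (a : ν →₀ ℕ) : Prop :=
  a ∈ f.support ∧ ∀ b ∈ f.support, σ.le b a

/-- The leading-term ideal `LT_σ(I)`: the ideal generated by the σ-leading monomials of the
nonzero elements of `I`. -/
noncomputable def ltIdeal {K : Type} [Field K] {ν : Type} (σ : MonomialOrd ν)
    (I : Ideal (MvPolynomial ν K)) : Ideal (MvPolynomial ν K) :=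
  Ideal.span { m | ∃ f ∈ I, ∃ a, IsLeadingExp σ f a ∧ m = monomial a (1 : K) }

/-- `G` is a σ-Gröbner basis of `I`: a finite subset of `I` whose σ-leading monomials
generate `LT_σ(I)`. -/
def IsGroebnerBasis {K : Type} [Field K] {ν : Type} (σ : MonomialOrd ν)
    (I : Ideal (MvPolynomial ν K)) (G : Finset (MvPolynomial ν K)) : Prop :=
  ↑G ⊆ (I : Set (MvPolynomial ν K)) ∧
    Ideal.span { m | ∃ g ∈ G, ∃ a, IsLeadingExp σ g a ∧ m = monomial a (1 : K) } = ltIdeal σ I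

namespace MonomialOrd

variable {ν : Type} (σ : MonomialOrd ν)

theorem le_of_le {a b : ν →₀ ℕ} (h : a ≤ b) : σ.le a b := by
  obtain ⟨c, rfl⟩ := le_iff_exists_add.mp h
  simpa [add_comm] using σ.add_le_add 0 c a (σ.zero_le c)

def Syn (_ : MonomialOrd ν) : Type := ν →₀ ℕ

noncomputable instance : AddCommMonoid σ.Syn := inferInstanceAs (AddCommMonoid (ν →₀ ℕ))

noncomputable instance : LinearOrder σ.Syn where
  le := σ.le
  le_refl := σ.le_refl
  le_trans := σ.le_trans
  le_antisymm := σ.le_antisymm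
  le_total := σ.le_total
  toDecidableLE := Classical.decRel _

instance : IsOrderedAddMonoid σ.Syn where
  add_le_add_left a b h c := σ.add_le_add a b c h

noncomputable def toSyn : (ν →₀ ℕ) ≃+ σ.Syn := AddEquiv.refl _

theorem toSyn_monotone : Monotone σ.toSyn := fun _ _ => σ.le_of_le

instance [Finite ν] : WellFoundedLT σ.Syn :=
  have : WellQuasiOrderedLE σ.Syn :=
    σ.toSyn_monotone.wellQuasiOrderedLE_of_wellQuasiOrderedLE_of_surjective σ.toSyn.surjective
  inferInstance

/-- `σ` in Mathlib's form, to which the division algorithm `MonomialOrder.div_set` applies. -/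
noncomputable def toMonomialOrder [Finite ν] : MonomialOrder ν where
  syn := σ.Syn
  toSyn := σ.toSyn
  toSyn_monotone := σ.toSyn_monotone

end MonomialOrd

section LeadingExp

variable {K : Type} [Field K] {ν : Type} {σ : MonomialOrd ν} {f : MvPolynomial ν K}

theorem IsLeadingExp.unique {a b : ν →₀ ℕ} (ha : IsLeadingExp σ f a) (hb : IsLeadingExp σ f b) :
    a = b :=
  σ.le_antisymm _ _ (hb.2 a ha.1) (ha.2 b hb.1)

theorem IsLeadingExp.ne_zero {a : ν →₀ ℕ} (ha : IsLeadingExp σ f a) : f ≠ 0 :=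
  support_nonempty.mp ⟨a, ha.1⟩

theorem exists_isLeadingExp (σ : MonomialOrd ν) (hf : f ≠ 0) : ∃ a, IsLeadingExp σ f a := by
  obtain ⟨a, ha, hmax⟩ := f.support.exists_max_image σ.toSyn (support_nonempty.mpr hf)
  exact ⟨a, ha, hmax⟩

theorem isLeadingExp_degree [Finite ν] (hf : f ≠ 0) :
    IsLeadingExp σ f (σ.toMonomialOrder.degree f) :=
  ⟨σ.toMonomialOrder.degree_mem_support hf, fun _ hb => σ.toMonomialOrder.le_degree hb⟩

end LeadingExp

section LeadingTermIdeal

variable {K : Type} [Field K] {ν : Type} (σ : MonomialOrd ν) (I : Ideal (MvPolynomial ν K))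

def leadingMonomials (S : Set (MvPolynomial ν K)) : Set (MvPolynomial ν K) :=
  { m | ∃ g ∈ S, ∃ a, IsLeadingExp σ g a ∧ m = monomial a (1 : K) }

theorem ltIdeal_eq_span_leadingMonomials : ltIdeal σ I = Ideal.span (leadingMonomials σ I) :=
  rfl

theorem leadingMonomials_mono {S T : Set (MvPolynomial ν K)} (h : S ⊆ T) :
    leadingMonomials σ S ⊆ leadingMonomials σ T := by
  rintro _ ⟨g, hg, a, ha, rfl⟩
  exact ⟨g, h hg, a, ha, rfl⟩

theorem span_leadingMonomials_le_ltIdeal {S : Set (MvPolynomial ν K)}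
    (hS : S ⊆ (I : Set (MvPolynomial ν K))) :
    Ideal.span (leadingMonomials σ S) ≤ ltIdeal σ I :=
  Ideal.span_mono (leadingMonomials_mono σ hS)

variable {σ I}

theorem monomial_mem_ltIdeal {f : MvPolynomial ν K} {a : ν →₀ ℕ} (hf : f ∈ I)
    (ha : IsLeadingExp σ f a) : monomial a (1 : K) ∈ ltIdeal σ I :=
  Ideal.subset_span ⟨f, hf, a, ha, rfl⟩

theorem monomial_mem_ltIdeal_iff {b : ν →₀ ℕ} :
    monomial b (1 : K) ∈ ltIdeal σ I ↔ ∃ f ∈ I, ∃ a, IsLeadingExp σ f a ∧ a ≤ b := by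
  classical
  have hLM : leadingMonomials σ I =
      (fun a => monomial a (1 : K)) '' { a | ∃ f ∈ I, IsLeadingExp σ f a } := by
    ext m
    constructor
    · rintro ⟨f, hf, a, ha, rfl⟩
      exact ⟨a, ⟨f, hf, ha⟩, rfl⟩
    · rintro ⟨a, ⟨f, hf, ha⟩, rfl⟩
      exact ⟨f, hf, a, ha, rfl⟩
  simp only [ltIdeal_eq_span_leadingMonomials, hLM, mem_ideal_span_monomial_image,
    support_monomial, one_ne_zero, if_false, Finset.mem_singleton, forall_eq]
  exact ⟨fun ⟨a, ⟨f, hf, ha⟩, hab⟩ => ⟨f, hf, a, ha, hab⟩,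
    fun ⟨f, hf, a, ha, hab⟩ => ⟨a, ⟨f, hf, ha⟩, hab⟩⟩

theorem eq_zero_of_forall_monomial_notMem_ltIdeal {p : MvPolynomial ν K} (hp : p ∈ I)
    (h : ∀ c ∈ p.support, monomial c (1 : K) ∉ ltIdeal σ I) : p = 0 := by
  by_contra hp0
  obtain ⟨a, ha⟩ := exists_isLeadingExp σ hp0
  exact h a ha.1 (monomial_mem_ltIdeal hp ha)

variable (σ I) in
theorem exists_sub_mem_forall_monomial_notMem_ltIdeal [Finite ν] (f : MvPolynomial ν K) :
    ∃ r, f - r ∈ I ∧ ∀ c ∈ r.support, monomial c (1 : K) ∉ ltIdeal σ I := by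
  let B : Set (MvPolynomial ν K) := { g | g ∈ I ∧ g ≠ 0 }
  obtain ⟨q, r, hf, -, hr⟩ := σ.toMonomialOrder.div_set (B := B)
    (fun b hb => isUnit_iff_ne_zero.mpr (σ.toMonomialOrder.leadingCoeff_ne_zero_iff.mpr hb.2)) f
  refine ⟨r, ?_, fun c hc hcσ => ?_⟩
  · rw [hf, add_sub_cancel_right]
    have hq := LinearMap.mem_range_self (Finsupp.linearCombination (MvPolynomial ν K)
      (fun b : B => (b : MvPolynomial ν K))) q
    rw [Finsupp.range_linearCombination] at hq
    refine Submodule.span_le.mpr ?_ hq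
    rintro _ ⟨b, rfl⟩
    exact b.2.1
  · obtain ⟨g, hg, a, ha, hac⟩ := monomial_mem_ltIdeal_iff.mp hcσ
    exact hr c hc g ⟨hg, ha.ne_zero⟩ ((isLeadingExp_degree ha.ne_zero).unique ha ▸ hac)

end LeadingTermIdeal

section GroebnerBasis

variable {K : Type} [Field K] {ν : Type} {σ τ : MonomialOrd ν} {I : Ideal (MvPolynomial ν K)}
  {G : Finset (MvPolynomial ν K)}

theorem ltIdeal_eq_of_le [Finite ν] (h : ltIdeal σ I ≤ ltIdeal τ I) :
    ltIdeal σ I = ltIdeal τ I := by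
  classical
  refine h.antisymm (Ideal.span_le.mpr ?_)
  rintro _ ⟨f, hf, a, ha, rfl⟩
  by_contra haσ
  -- The `τ`-normal form `r` of `X^a` has no monomial in `LT_τ(I) ⊇ LT_σ(I)`, and neither has
  -- `X^a - r ∈ I`, which therefore vanishes; but `X^a ∈ LT_τ(I)`.
  obtain ⟨r, hr, hrτ⟩ := exists_sub_mem_forall_monomial_notMem_ltIdeal τ I (monomial a (1 : K))
  have hσ : ∀ c ∈ (monomial a (1 : K) - r).support, monomial c (1 : K) ∉ ltIdeal σ I := by
    intro c hc
    rcases Finset.mem_union.mp (support_sub _ _ _ hc) with hc | hc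
    · rwa [Finset.mem_singleton.mp (support_monomial_subset hc)]
    · exact fun hcσ => hrτ c hc (h hcσ)
  have hra : monomial a (1 : K) = r :=
    sub_eq_zero.mp (eq_zero_of_forall_monomial_notMem_ltIdeal hr hσ)
  exact hrτ a (by simp [← hra, coeff_monomial]) (monomial_mem_ltIdeal hf ha)

theorem exists_isGroebnerBasis [Finite ν] (σ : MonomialOrd ν) (I : Ideal (MvPolynomial ν K)) :
    ∃ G, IsGroebnerBasis σ I G := by
  classical
  obtain ⟨T, hT, hspan⟩ : ∃ T : Finset (MvPolynomial ν K),
      ↑T ⊆ leadingMonomials σ (I : Set (MvPolynomial ν K)) ∧ ltIdeal σ I = Ideal.span ↑T :=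
    (Submodule.fg_span_iff_fg_span_finset_subset _).mp (IsNoetherian.noetherian (ltIdeal σ I))
  have hT' : ∀ m ∈ T, ∃ g ∈ I, ∃ a, IsLeadingExp σ g a ∧ m = monomial a (1 : K) :=
    fun m hm => hT hm
  choose! g hgI a ha hgm using hT'
  have hgT : ↑(T.image g) ⊆ (I : Set (MvPolynomial ν K)) := by simpa [Set.subset_def] using hgI
  refine ⟨T.image g, hgT, (span_leadingMonomials_le_ltIdeal σ I hgT).antisymm ?_⟩
  rw [hspan]
  exact Ideal.span_mono fun m hm => ⟨g m, Finset.mem_image_of_mem g hm, a m, ha m hm, hgm m hm⟩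

theorem IsGroebnerBasis.mono {G' : Finset (MvPolynomial ν K)} (hG : IsGroebnerBasis σ I G)
    (hGG' : G ⊆ G') (hG' : ↑G' ⊆ (I : Set (MvPolynomial ν K))) : IsGroebnerBasis σ I G' :=
  ⟨hG', (span_leadingMonomials_le_ltIdeal σ I hG').antisymm
    (hG.2 ▸ Ideal.span_mono (leadingMonomials_mono σ (Finset.coe_subset.mpr hGG')))⟩

theorem IsGroebnerBasis.of_isLeadingExp [Finite ν] (hG : IsGroebnerBasis σ I G)
    (h : ∀ g ∈ G, ∀ a, IsLeadingExp σ g a → IsLeadingExp τ g a) : IsGroebnerBasis τ I G := by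
  have hστ : leadingMonomials σ (G : Set (MvPolynomial ν K)) ⊆ leadingMonomials τ G := by
    rintro _ ⟨g, hg, a, ha, rfl⟩
    exact ⟨g, hg, a, h g hg a ha, rfl⟩
  have hσ : ltIdeal σ I ≤ Ideal.span (leadingMonomials τ (G : Set (MvPolynomial ν K))) :=
    hG.2 ▸ Ideal.span_mono hστ
  have hτ := span_leadingMonomials_le_ltIdeal τ I hG.1
  exact ⟨hG.1, hτ.antisymm (ltIdeal_eq_of_le (hσ.trans hτ) ▸ hσ)⟩

end GroebnerBasis

namespace MonomialOrd

variable {ν : Type}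

open Classical in
noncomputable def toIndicator (σ : MonomialOrd ν) : (ν →₀ ℕ) → (ν →₀ ℕ) → Bool :=
  fun a b => decide (σ.le a b)

noncomputable instance : TopologicalSpace (MonomialOrd ν) := .induced toIndicator inferInstance

theorem continuous_toIndicator : Continuous (toIndicator : MonomialOrd ν → _) :=
  continuous_induced_dom

theorem isOpen_setOf_le (a b : ν →₀ ℕ) : IsOpen {σ : MonomialOrd ν | σ.le a b} := by
  have : Continuous fun σ : MonomialOrd ν => σ.toIndicator a b :=
    (continuous_apply_apply a b).comp continuous_toIndicator
  convert (isOpen_discrete {true}).preimage this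
  ext
  simp [toIndicator]

theorem range_toIndicator : Set.range (toIndicator : MonomialOrd ν → _) =
    {F | (∀ a, F a a) ∧ (∀ a b c, F a b → F b c → F a c) ∧ (∀ a b, F a b → F b a → a = b) ∧
      (∀ a b, F a b ∨ F b a) ∧ (∀ a b c, F a b → F (a + c) (b + c)) ∧ ∀ a, F 0 a} := by
  ext F
  constructor
  · rintro ⟨σ, rfl⟩
    simpa [toIndicator] using ⟨σ.le_refl, σ.le_trans, σ.le_antisymm, σ.le_total, σ.add_le_add,
      σ.zero_le⟩
  · rintro ⟨h₁, h₂, h₃, h₄, h₅, h₆⟩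
    exact ⟨⟨fun a b => F a b, h₁, h₂, h₃, h₄, h₅, h₆⟩, by ext; simp [toIndicator]⟩

theorem isClosed_range_toIndicator : IsClosed (Set.range (toIndicator : MonomialOrd ν → _)) := by
  have h (a b : ν →₀ ℕ) : IsClopen {F : (ν →₀ ℕ) → (ν →₀ ℕ) → Bool | F a b} :=
    (isClopen_discrete {true}).preimage (by fun_prop)
  rw [range_toIndicator]
  refine .and ?_ (.and ?_ (.and ?_ (.and ?_ (.and ?_ ?_)))) <;> simp only [Set.ofPred_forall]
  · exact isClosed_iInter fun a => (h a a).isClosed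
  · exact isClosed_iInter fun a => isClosed_iInter fun b => isClosed_iInter fun c =>
      isClosed_imp (h a b).isOpen (isClosed_imp (h b c).isOpen (h a c).isClosed)
  · exact isClosed_iInter fun a => isClosed_iInter fun b =>
      isClosed_imp (h a b).isOpen (isClosed_imp (h b a).isOpen isClosed_const)
  · exact isClosed_iInter fun a => isClosed_iInter fun b => (h a b).isClosed.union (h b a).isClosed
  · exact isClosed_iInter fun a => isClosed_iInter fun b => isClosed_iInter fun c =>
      isClosed_imp (h a b).isOpen (h _ _).isClosed
  · exact isClosed_iInter fun a => (h 0 a).isClosed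

instance : CompactSpace (MonomialOrd ν) :=
  ⟨(Topology.IsInducing.induced toIndicator).isCompact_iff.mpr
    (Set.image_univ ▸ isClosed_range_toIndicator.isCompact)⟩

end MonomialOrd

section Universal

open Topology

variable {K : Type} [Field K] {ν : Type}

theorem IsLeadingExp.eventually_nhds {σ : MonomialOrd ν} {f : MvPolynomial ν K} {a : ν →₀ ℕ}
    (h : IsLeadingExp σ f a) : ∀ᶠ τ in 𝓝 σ, IsLeadingExp τ f a :=
  ((Filter.eventually_all_finset f.support).mpr fun b hb =>
    (MonomialOrd.isOpen_setOf_le b a).mem_nhds (h.2 b hb)).mono fun _ hτ => ⟨h.1, hτ⟩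

theorem exists_eventually_isGroebnerBasis [Finite ν] (σ : MonomialOrd ν)
    (I : Ideal (MvPolynomial ν K)) : ∃ G, ∀ᶠ τ in 𝓝 σ, IsGroebnerBasis τ I G := by
  obtain ⟨G, hG⟩ := exists_isGroebnerBasis σ I
  have hlead : ∀ g ∈ G, ∀ᶠ τ in 𝓝 σ, ∀ a, IsLeadingExp σ g a → IsLeadingExp τ g a := by
    intro g _
    by_cases hg : g = 0
    · exact .of_forall fun τ a ha => absurd hg ha.ne_zero
    obtain ⟨a, ha⟩ := exists_isLeadingExp σ hg
    filter_upwards [ha.eventually_nhds] with τ hτ b hb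
    exact hb.unique ha ▸ hτ
  exact ⟨G, ((Filter.eventually_all_finset G).mpr hlead).mono fun τ hτ => hG.of_isLeadingExp hτ⟩

end Universal

/-- existence of a universal Gröbner basis: a finite subset of `I` which is a
σ-Gröbner basis of `I` simultaneously for all monomial orders `σ`. -/
theorem exists_universal_groebner_basis {K : Type} [Field K] {n : ℕ}
    (I : Ideal (MvPolynomial (Fin n) K)) :
    ∃ G : Finset (MvPolynomial (Fin n) K),
      ∀ σ : MonomialOrd (Fin n), IsGroebnerBasis σ I G := by
  classical
  choose G hG using fun σ : MonomialOrd (Fin n) => exists_eventually_isGroebnerBasis σ I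
  obtain ⟨t, ht⟩ := CompactSpace.elim_nhds_subcover _ hG
  have hGI : ↑(t.biUnion G) ⊆ (I : Set (MvPolynomial (Fin n) K)) := by
    simpa using fun σ _ => (hG σ).self_of_nhds.1
  refine ⟨t.biUnion G, fun τ => ?_⟩
  obtain ⟨σ, hσt, hτ⟩ := Set.mem_iUnion₂.mp (Set.eq_univ_iff_forall.mp ht τ)
  exact IsGroebnerBasis.mono hτ (Finset.subset_biUnion_of_mem G hσt) hGI
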